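/- Let Γ act on ℂ² as the group generated by m_θ(z₁,z₂) = (e^{iθ}z₁, e^{iθ}z₂) and ρ(z₁,z₂) = (−conj(z₂), conj(z₁)). Then the Γ-orbit of z ∈ ℂ² is {0} if z = 0, and if z ≠ 0 the orbit is the union of the two circles {m_θ z : θ ∈ ℝ} and {m_θ ρ(z) : θ ∈ ℝ}, which lie in orthogonal 2-dimensional planes of ℝ⁴. -/

import Mathlib

/-!
The relations `ρ m_θ = m_{-θ} ρ` and `ρ² = m_π` show that every element of `Γ` is of the form
`m_θ` or `m_θ ρ`, which gives the orbits. For the orthogonality, the Hermitian product of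
`e^{iθ} z` and `e^{iφ} ρ z` is `e^{i(θ-φ)} (-z₁ z₂ + z₂ z₁) = 0`; its real part is the Euclidean
inner product of `ℝ⁴`, which is bilinear and hence vanishes on the two real spans.
-/

open Complex ComplexConjugate

theorem LinearMap.eq_zero_of_mem_span_of_mem_span {R M N P : Type*} [CommSemiring R]
    [AddCommMonoid M] [AddCommMonoid N] [AddCommMonoid P] [Module R M] [Module R N] [Module R P]
    (f : M →ₗ[R] N →ₗ[R] P) {s : Set M} {t : Set N} (h : ∀ a ∈ s, ∀ b ∈ t, f a b = 0)
    {x : M} {y : N} (hx : x ∈ Submodule.span R s) (hy : y ∈ Submodule.span R t) : f x y = 0 := by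
  have hxy := Submodule.apply_mem_map₂ f hx hy
  rwa [Submodule.map₂_span_span, Submodule.span_eq_bot.mpr ?_, Submodule.mem_bot] at hxy
  rintro _ ⟨a, ha, b, hb, rfl⟩
  exact h a ha b hb

noncomputable def euclideanForm : (ℂ × ℂ) →ₗ[ℝ] (ℂ × ℂ) →ₗ[ℝ] ℝ :=
  LinearMap.mk₂ ℝ (fun w v => (w.1 * conj v.1 + w.2 * conj v.2).re)
    (fun _ _ _ => by simp only [Prod.fst_add, Prod.snd_add, add_mul, add_re]; ring)
    (fun _ _ _ => by simp; ring)
    (fun _ _ _ => by simp only [Prod.fst_add, Prod.snd_add, map_add, mul_add, add_re]; ring)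
    (fun _ _ _ => by simp; ring)

theorem euclideanForm_apply (w v : ℂ × ℂ) :
    euclideanForm w v = (w.1 * conj v.1 + w.2 * conj v.2).re :=
  rfl

section

variable {ρ : (ℂ × ℂ) ≃ₗᵢ[ℝ] (ℂ × ℂ)} {m : ℝ → ((ℂ × ℂ) ≃ₗᵢ[ℝ] (ℂ × ℂ))}

theorem phase_mul_phase
    (hm : ∀ (θ : ℝ) (z : ℂ × ℂ), m θ z = (exp (θ * I) * z.1, exp (θ * I) * z.2)) (θ φ : ℝ) :
    m θ * m φ = m (θ + φ) := by
  ext z <;> simp [hm, ← mul_assoc, ← exp_add, add_mul]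

theorem phase_zero
    (hm : ∀ (θ : ℝ) (z : ℂ × ℂ), m θ z = (exp (θ * I) * z.1, exp (θ * I) * z.2)) :
    m 0 = 1 := by
  ext z <;> simp [hm]

theorem phase_inv
    (hm : ∀ (θ : ℝ) (z : ℂ × ℂ), m θ z = (exp (θ * I) * z.1, exp (θ * I) * z.2)) (θ : ℝ) :
    (m θ)⁻¹ = m (-θ) :=
  inv_eq_of_mul_eq_one_right <| by rw [phase_mul_phase hm, add_neg_cancel, phase_zero hm]

theorem rho_mul_phase (hρ : ∀ z : ℂ × ℂ, ρ z = (-conj z.2, conj z.1))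
    (hm : ∀ (θ : ℝ) (z : ℂ × ℂ), m θ z = (exp (θ * I) * z.1, exp (θ * I) * z.2)) (θ : ℝ) :
    ρ * m θ = m (-θ) * ρ := by
  have hconj : conj (exp (θ * I)) = exp ((-θ : ℝ) * I) := by
    rw [← exp_conj]; simp
  ext z <;> simp [hρ, hm, hconj]

theorem rho_mul_rho (hρ : ∀ z : ℂ × ℂ, ρ z = (-conj z.2, conj z.1))
    (hm : ∀ (θ : ℝ) (z : ℂ × ℂ), m θ z = (exp (θ * I) * z.1, exp (θ * I) * z.2)) :
    ρ * ρ = m Real.pi := by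
  ext z <;> simp [hρ, hm, exp_pi_mul_I]

theorem rho_inv (hρ : ∀ z : ℂ × ℂ, ρ z = (-conj z.2, conj z.1))
    (hm : ∀ (θ : ℝ) (z : ℂ × ℂ), m θ z = (exp (θ * I) * z.1, exp (θ * I) * z.2)) :
    ρ⁻¹ = m (-Real.pi) * ρ :=
  inv_eq_of_mul_eq_one_left <| by
    rw [mul_assoc, rho_mul_rho hρ hm, phase_mul_phase hm, neg_add_cancel, phase_zero hm]

theorem mem_closure_rho_phase_iff (hρ : ∀ z : ℂ × ℂ, ρ z = (-conj z.2, conj z.1))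
    (hm : ∀ (θ : ℝ) (z : ℂ × ℂ), m θ z = (exp (θ * I) * z.1, exp (θ * I) * z.2))
    {g : (ℂ × ℂ) ≃ₗᵢ[ℝ] (ℂ × ℂ)} :
    g ∈ Subgroup.closure ({ρ} ∪ Set.range m) ↔ ∃ θ, g = m θ ∨ g = m θ * ρ := by
  refine ⟨fun hg => ?_, ?_⟩
  · have phase_mul : ∀ a g, (∃ θ, g = m θ ∨ g = m θ * ρ) →
        ∃ θ, m a * g = m θ ∨ m a * g = m θ * ρ := by
      rintro a g ⟨b, rfl | rfl⟩
      · exact ⟨a + b, .inl (phase_mul_phase hm a b)⟩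
      · exact ⟨a + b, .inr (by rw [← mul_assoc, phase_mul_phase hm])⟩
    have rho_mul : ∀ g, (∃ θ, g = m θ ∨ g = m θ * ρ) →
        ∃ θ, ρ * g = m θ ∨ ρ * g = m θ * ρ := by
      rintro g ⟨b, rfl | rfl⟩
      · exact ⟨-b, .inr (rho_mul_phase hρ hm b)⟩
      · refine ⟨-b + Real.pi, .inl ?_⟩
        rw [← mul_assoc, rho_mul_phase hρ hm, mul_assoc, rho_mul_rho hρ hm, phase_mul_phase hm]
    induction hg using Subgroup.closure_induction_left with
    | one => exact ⟨0, .inl (phase_zero hm).symm⟩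
    | mul_left x hx y _ ih =>
      rcases hx with rfl | ⟨a, rfl⟩
      · exact rho_mul y ih
      · exact phase_mul a y ih
    | inv_mul_cancel x hx y _ ih =>
      rcases hx with rfl | ⟨a, rfl⟩
      · rw [rho_inv hρ hm, mul_assoc]
        exact phase_mul _ _ (rho_mul y ih)
      · rw [phase_inv hm]
        exact phase_mul _ y ih
  · have hρ_mem : ρ ∈ Subgroup.closure ({ρ} ∪ Set.range m) := Subgroup.subset_closure (.inl rfl)
    have hm_mem : ∀ θ, m θ ∈ Subgroup.closure ({ρ} ∪ Set.range m) :=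
      fun θ => Subgroup.subset_closure (.inr ⟨θ, rfl⟩)
    rintro ⟨θ, rfl | rfl⟩
    · exact hm_mem θ
    · exact mul_mem (hm_mem θ) hρ_mem

theorem euclideanForm_phase_phase_rho (hρ : ∀ z : ℂ × ℂ, ρ z = (-conj z.2, conj z.1))
    (hm : ∀ (θ : ℝ) (z : ℂ × ℂ), m θ z = (exp (θ * I) * z.1, exp (θ * I) * z.2))
    (z : ℂ × ℂ) (θ φ : ℝ) : euclideanForm (m θ z) (m φ (ρ z)) = 0 := by
  have hherm : (m θ z).1 * conj (m φ (ρ z)).1 + (m θ z).2 * conj (m φ (ρ z)).2 = 0 := by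
    simp only [hm, hρ, map_mul, map_neg, conj_conj]
    ring
  rw [euclideanForm_apply, hherm, zero_re]

end

theorem stmt_8 (ρ : (ℂ × ℂ) ≃ₗᵢ[ℝ] (ℂ × ℂ)) (m : ℝ → ((ℂ × ℂ) ≃ₗᵢ[ℝ] (ℂ × ℂ)))
    (hρ : ∀ z : ℂ × ℂ, ρ z = (-(starRingEnd ℂ z.2), starRingEnd ℂ z.1))
    (hm : ∀ (θ : ℝ) (z : ℂ × ℂ),
      m θ z = (Complex.exp (θ * Complex.I) * z.1, Complex.exp (θ * Complex.I) * z.2))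
    (Γ : Subgroup ((ℂ × ℂ) ≃ₗᵢ[ℝ] (ℂ × ℂ)))
    (hΓ : Γ = Subgroup.closure ({ρ} ∪ Set.range m)) :
    ({w : ℂ × ℂ | ∃ g ∈ Γ, g 0 = w} = {0}) ∧
    ∀ z : ℂ × ℂ, z ≠ 0 →
      ({w : ℂ × ℂ | ∃ g ∈ Γ, g z = w} =
        {w : ℂ × ℂ | ∃ θ : ℝ, w = m θ z} ∪ {w : ℂ × ℂ | ∃ θ : ℝ, w = m θ (ρ z)}) ∧
      (∀ w ∈ Submodule.span ℝ {w : ℂ × ℂ | ∃ θ : ℝ, w = m θ z},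
       ∀ v ∈ Submodule.span ℝ {w : ℂ × ℂ | ∃ θ : ℝ, w = m θ (ρ z)},
        (w.1 * starRingEnd ℂ v.1 + w.2 * starRingEnd ℂ v.2).re = 0) := by
  subst hΓ
  refine ⟨?_, fun z _ => ⟨?_, fun w hw v hv => ?_⟩⟩
  · ext w
    exact ⟨fun ⟨g, _, hg⟩ => hg ▸ map_zero g, fun h0 => ⟨1, one_mem _, h0 ▸ rfl⟩⟩
  · ext w
    simp only [Set.mem_ofPred_eq, Set.mem_union, mem_closure_rho_phase_iff hρ hm]
    constructor
    · rintro ⟨g, ⟨θ, rfl | rfl⟩, rfl⟩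
      exacts [.inl ⟨θ, rfl⟩, .inr ⟨θ, rfl⟩]
    · rintro (⟨θ, rfl⟩ | ⟨θ, rfl⟩)
      exacts [⟨m θ, ⟨θ, .inl rfl⟩, rfl⟩, ⟨m θ * ρ, ⟨θ, .inr rfl⟩, rfl⟩]
  · rw [← euclideanForm_apply]
    refine euclideanForm.eq_zero_of_mem_span_of_mem_span ?_ hw hv
    rintro _ ⟨θ, rfl⟩ _ ⟨φ, rfl⟩
    exact euclideanForm_phase_phase_rho hρ hm z θ φ
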